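/- arXiv:1305.5344 — 8 statements merged into one kernel-verified Lean document; each statement's English description precedes it below -/
import Mathlib

section
/- Let A be an mth order n-dimensional completely positive tensor with m odd, m ≥ 2. If λ > 0 is a Z-eigenvalue of A with Z-eigenvector x (i.e., A x^{m-1} = λ x and xᵀx = 1), then x is nonnegative, i.e., x_i ≥ 0 for all i. -/
noncomputable section
open Classical Finset

/-- An `m`th order `n`-dimensional real tensor is completely positive if its entries are
given by a sum of entrywise products of finitely many (at least one) nonnegative vectors. -/
def IsCPTensor (m n : ℕ) (A : (Fin m → Fin n) → ℝ) : Prop :=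
  ∃ r : ℕ, 0 < r ∧ ∃ u : Fin r → Fin n → ℝ,
    (∀ k i, 0 ≤ u k i) ∧ ∀ f : Fin m → Fin n, A f = ∑ k, ∏ j, u k (f j)

/-- The `i`-th component of `A x^{m-1}`:
`(A x^{m-1})_i = Σ_{i_2,…,i_m} a_{i i_2⋯i_m} x_{i_2}⋯x_{i_m}`. -/
def contract (m n : ℕ) (hm : 0 < m) (A : (Fin m → Fin n) → ℝ) (x : Fin n → ℝ)
    (i : Fin n) : ℝ :=
  ∑ g : Fin m → Fin n,
    if g ⟨0, hm⟩ = i then A g * ∏ j ∈ Finset.univ.erase (⟨0, hm⟩ : Fin m), x (g j) else 0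

/-! Expanding a completely positive tensor `A = Σ_k u_k^{⊗m}` gives
`(A x^{m-1})_i = Σ_k (u_k)_i (u_k ⬝ x)^{m-1}`. When `m` is odd, `m - 1` is even, so every term is
nonnegative for every `x`; hence `λ x_i = (A x^{m-1})_i ≥ 0` forces `x_i ≥ 0` when `λ > 0`. -/

theorem contract_sum {m n : ℕ} (hm : 0 < m) {ι : Type*} (s : Finset ι)
    (B : ι → (Fin m → Fin n) → ℝ) (x : Fin n → ℝ) (i : Fin n) :
    contract m n hm (fun f => ∑ k ∈ s, B k f) x i = ∑ k ∈ s, contract m n hm (B k) x i := by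
  simp only [contract, sum_mul]
  rw [sum_comm]
  refine sum_congr rfl fun g _ => ?_
  split_ifs <;> simp

theorem contract_rankOne {m n : ℕ} (hm : 0 < m) (v x : Fin n → ℝ) (i : Fin n) :
    contract m n hm (fun f => ∏ j, v (f j)) x i = v i * (∑ t, v t * x t) ^ (m - 1) := by
  set z : Fin m := ⟨0, hm⟩
  -- Each summand of `contract` is the product over `j` of `w j (g j)`, so the sum factorizes.
  set w : Fin m → Fin n → ℝ := fun j t => if j = z then (if t = i then v t else 0) else v t * x t
  have hw_erase : ∀ g : Fin m → Fin n, ∏ j ∈ univ.erase z, w j (g j)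
      = ∏ j ∈ univ.erase z, v (g j) * x (g j) :=
    fun g => prod_congr rfl fun j hj => if_neg (ne_of_mem_erase hj)
  have hsummand : ∀ g : Fin m → Fin n,
      (if g z = i then (∏ j, v (g j)) * ∏ j ∈ univ.erase z, x (g j) else 0) = ∏ j, w j (g j) := by
    intro g
    rw [← mul_prod_erase univ (fun j => w j (g j)) (mem_univ z), hw_erase,
      ← mul_prod_erase univ (fun j => v (g j)) (mem_univ z), prod_mul_distrib]
    simp only [w, if_true]
    split_ifs <;> ring
  have hfactor : ∏ j, ∑ t, w j t = v i * (∑ t, v t * x t) ^ (m - 1) := by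
    rw [← mul_prod_erase _ _ (mem_univ z), prod_congr rfl fun j hj => sum_congr rfl fun t _ =>
      (if_neg (ne_of_mem_erase hj) : w j t = v t * x t), prod_const, card_erase_of_mem (mem_univ z),
      card_univ, Fintype.card_fin]
    simp [w]
  calc contract m n hm (fun f => ∏ j, v (f j)) x i = ∑ g : Fin m → Fin n, ∏ j, w j (g j) :=
        sum_congr rfl fun g _ => hsummand g
    _ = ∏ j, ∑ t, w j t := (Fintype.prod_sum w).symm
    _ = v i * (∑ t, v t * x t) ^ (m - 1) := hfactor

theorem IsCPTensor.contract_nonneg {m n : ℕ} {A : (Fin m → Fin n) → ℝ} (hA : IsCPTensor m n A)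
    (hodd : Odd m) (hm : 0 < m) (x : Fin n → ℝ) (i : Fin n) : 0 ≤ contract m n hm A x i := by
  obtain ⟨r, -, u, hu, hAu⟩ := hA
  have heven : Even (m - 1) := Nat.Odd.sub_odd hodd odd_one
  rw [show A = fun f => ∑ k, ∏ j, u k (f j) from funext hAu, contract_sum]
  simp only [contract_rankOne]
  exact sum_nonneg fun k _ => mul_nonneg (hu k i) (heven.pow_nonneg _)

/-- For a completely positive tensor of odd order m ≥ 2, a Z-eigenvector associated with a
positive Z-eigenvalue is entrywise nonnegative. -/
theorem cp_tensor_Z_eigenvector_nonneg_odd (m n : ℕ) (hm : 2 ≤ m) (hodd : Odd m)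
    (A : (Fin m → Fin n) → ℝ) (hA : IsCPTensor m n A)
    (lam : ℝ) (hlam : 0 < lam) (x : Fin n → ℝ)
    (heig : ∀ i : Fin n, contract m n (by omega) A x i = lam * x i) :
    ∀ i : Fin n, 0 ≤ x i := by
  intro i
  have hnonneg : 0 ≤ lam * x i := heig i ▸ hA.contract_nonneg hodd (by omega) x i
  exact nonneg_of_mul_nonneg_right hnonneg hlam
end
end

section
/- Let A = (a_{i_1⋯i_m}) be an mth order n-dimensional completely positive tensor with m ≥ 2. If (i_1,…,i_m) is dominated by (j_1,…,j_m) (i.e., the set of distinct indices appearing among i_1,…,i_m is contained in the set of distinct indices appearing among j_1,…,j_m) and a_{j_1⋯j_m} ≠ 0, then a_{i_1⋯i_m} > 0. -/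
/-! Some rank-one term of the decomposition is nonzero at `g`; its factors at `f` are among
its factors at `g`, so it is positive at `f`, and all other terms are nonnegative. -/

noncomputable section
open Classical Finset

lemma prod_comp_pos_of_range_subset {α β ι R : Type*} [Fintype α] [Fintype β]
    [CommSemiring R] [PartialOrder R] [IsStrictOrderedRing R]
    {u : ι → R} (hu : ∀ i, 0 ≤ u i) {f : α → ι} {g : β → ι}
    (hdom : Set.range f ⊆ Set.range g) (hg : ∏ j, u (g j) ≠ 0) :
    0 < ∏ j, u (f j) := by
  refine prod_pos fun j _ => (hu (f j)).lt_of_ne' ?_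
  obtain ⟨j', hj'⟩ := hdom ⟨j, rfl⟩
  rw [← hj']
  exact fun h => hg (prod_eq_zero (mem_univ j') h)

theorem cp_tensor_dominance_general (m n : ℕ)
    (A : (Fin m → Fin n) → ℝ) (hA : IsCPTensor m n A)
    (f g : Fin m → Fin n) (hdom : Set.range f ⊆ Set.range g) (hne : A g ≠ 0) :
    0 < A f := by
  obtain ⟨r, -, u, hu, hAeq⟩ := hA
  rw [hAeq g] at hne
  obtain ⟨k, -, hk⟩ := exists_ne_zero_of_sum_ne_zero hne
  rw [hAeq f]
  exact sum_pos' (fun k _ => prod_nonneg fun j _ => hu k (f j))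
    ⟨k, mem_univ k, prod_comp_pos_of_range_subset (hu k) hdom hk⟩

/-- Dominance property of a CP tensor: if the distinct indices of the tuple f are contained
in those of the tuple g and the entry at g is nonzero, then the entry at f is positive. -/
theorem cp_tensor_dominance (m n : ℕ) (hm : 2 ≤ m)
    (A : (Fin m → Fin n) → ℝ) (hA : IsCPTensor m n A)
    (f g : Fin m → Fin n) (hdom : Set.range f ⊆ Set.range g) (hne : A g ≠ 0) :
    0 < A f :=
  cp_tensor_dominance_general m n A hA f g hdom hne
end
end

section
/- Let A = (a_{i_1⋯i_m}) be an mth order n-dimensional completely positive tensor with m ≥ 2. If (i_1,…,i_m) is similar to (j_1,…,j_m) (i.e., the set of distinct indices appearing among i_1,…,i_m equals the set of distinct indices appearing among j_1,…,j_m), then a_{j_1⋯j_m} = 0 if and only if a_{i_1⋯i_m} = 0. -/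
/-! A nonnegative sum of products vanishes iff every summand has a vanishing factor, so the
zero pattern of a CP tensor `∑ₖ u⁽ᵏ⁾ ⊗ ⋯ ⊗ u⁽ᵏ⁾` at `f` is decided by the set `range f` alone. -/

noncomputable section
open Classical Finset

theorem prod_comp_eq_zero_iff {R ι α : Type*} [CommMonoidWithZero R] [NoZeroDivisors R]
    [Nontrivial R] [Fintype ι] (v : α → R) (f : ι → α) :
    ∏ j, v (f j) = 0 ↔ ∃ i ∈ Set.range f, v i = 0 := by
  simp [prod_eq_zero_iff]

theorem sum_prod_comp_eq_zero_iff {R ι κ α : Type*} [CommSemiring R] [PartialOrder R]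
    [IsOrderedRing R] [NoZeroDivisors R] [Nontrivial R] [Fintype ι] [Fintype κ]
    {u : κ → α → R} (hu : ∀ k i, 0 ≤ u k i) (f : ι → α) :
    ∑ k, ∏ j, u k (f j) = 0 ↔ ∀ k, ∃ i ∈ Set.range f, u k i = 0 := by
  rw [sum_eq_zero_iff_of_nonneg fun k _ => prod_nonneg fun j _ => hu k (f j)]
  simp only [mem_univ, true_implies, prod_comp_eq_zero_iff]

theorem IsCPTensor.exists_apply_eq_zero_iff {m n : ℕ} {A : (Fin m → Fin n) → ℝ}
    (hA : IsCPTensor m n A) :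
    ∃ (r : ℕ) (u : Fin r → Fin n → ℝ), ∀ f, A f = 0 ↔ ∀ k, ∃ i ∈ Set.range f, u k i = 0 := by
  obtain ⟨r, -, u, hu, hA⟩ := hA
  exact ⟨r, u, fun f => (hA f).symm ▸ sum_prod_comp_eq_zero_iff hu f⟩

theorem cp_tensor_similar_zero_iff_general (m n : ℕ)
    (A : (Fin m → Fin n) → ℝ) (hA : IsCPTensor m n A)
    (f g : Fin m → Fin n) (hsim : Set.range f = Set.range g) :
    A g = 0 ↔ A f = 0 := by
  obtain ⟨r, u, hu⟩ := hA.exists_apply_eq_zero_iff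
  rw [hu, hu, hsim]

/-- If two index tuples are similar (same set of distinct indices), then the corresponding
entries of a CP tensor vanish simultaneously. -/
theorem cp_tensor_similar_zero_iff (m n : ℕ) (hm : 2 ≤ m)
    (A : (Fin m → Fin n) → ℝ) (hA : IsCPTensor m n A)
    (f g : Fin m → Fin n) (hsim : Set.range f = Set.range g) :
    A g = 0 ↔ A f = 0 :=
  cp_tensor_similar_zero_iff_general m n A hA f g hsim
end
end

section
/- Let A = (a_{i_1⋯i_m}) be an mth order n-dimensional completely positive tensor with m ≥ 2, and let I = {(i^{(1)}_1,…,i^{(1)}_m),…,(i^{(s)}_1,…,i^{(s)}_m)} be an s-duplicate of an index tuple (j_1,…,j_m). Then (1/s) Σ_{p=1}^s a_{i^{(p)}_1⋯i^{(p)}_m} ≥ a_{j_1⋯j_m}. -/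
noncomputable section
open Classical Finset

/-! A rank-one tensor `u ⊗ ⋯ ⊗ u` has the entry `∏ v, u v ^ (multiplicity of v)` at a tuple, so
the entries over an `s`-duplicate of `j` multiply to the `s`-th power of the entry at `j`, and
AM-GM gives the dominance for nonnegative `u`; a completely positive tensor is a sum of such. -/

section Duplicate

variable {ι κ α M : Type*} [Fintype ι] [Fintype κ] [Fintype α] [DecidableEq α]

theorem prod_comp_eq_prod_pow_card [CommMonoid M] (u : α → M) (f : ι → α) :
    ∏ q, u (f q) = ∏ v, u v ^ #{q | f q = v} := by
  rw [← prod_fiberwise univ f (fun q => u (f q))]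
  refine prod_congr rfl fun v _ => ?_
  rw [prod_congr rfl fun q hq => congrArg u (mem_filter.mp hq).2, prod_const]

theorem prod_prod_comp_eq_pow_of_duplicate [CommMonoid M] (u : α → M) (I : κ → ι → α)
    (j : ι → α) (hcount : ∀ v, ∑ p, #{q | I p q = v} = Fintype.card κ * #{q | j q = v}) :
    ∏ p, ∏ q, u (I p q) = (∏ q, u (j q)) ^ Fintype.card κ := by
  simp only [prod_comp_eq_prod_pow_card u]
  rw [prod_comm, ← prod_pow]
  refine prod_congr rfl fun v _ => ?_
  rw [prod_pow_eq_pow_sum, hcount v, pow_mul']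

omit [Fintype α] [DecidableEq α] in
theorem Real.le_mean_of_prod_eq_pow [Nonempty κ] {z : κ → ℝ} (hz : ∀ p, 0 ≤ z p) {c : ℝ}
    (hc : 0 ≤ c) (hprod : ∏ p, z p = c ^ Fintype.card κ) :
    c ≤ (1 / (Fintype.card κ : ℝ)) * ∑ p, z p := by
  have hcard : (Fintype.card κ : ℝ) ≠ 0 := Nat.cast_ne_zero.mpr Fintype.card_ne_zero
  calc c = (∏ p, z p) ^ (1 / (Fintype.card κ : ℝ)) := by
        rw [hprod, ← Real.rpow_natCast, ← Real.rpow_mul hc, mul_one_div_cancel hcard,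
          Real.rpow_one]
    _ = ∏ p, z p ^ (1 / (Fintype.card κ : ℝ)) :=
        (Real.finsetProd_rpow _ _ (fun p _ => hz p) _).symm
    _ ≤ ∑ p, (1 / (Fintype.card κ : ℝ)) * z p :=
        Real.geom_mean_le_arith_mean_weighted _ _ _ (fun _ _ => by positivity)
          (by simp [hcard]) (fun p _ => hz p)
    _ = (1 / (Fintype.card κ : ℝ)) * ∑ p, z p := (mul_sum _ _ _).symm

theorem prod_comp_le_mean_of_duplicate [Nonempty κ] {u : α → ℝ} (hu : ∀ a, 0 ≤ u a)
    (I : κ → ι → α) (j : ι → α)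
    (hcount : ∀ v, ∑ p, #{q | I p q = v} = Fintype.card κ * #{q | j q = v}) :
    ∏ q, u (j q) ≤ (1 / (Fintype.card κ : ℝ)) * ∑ p, ∏ q, u (I p q) :=
  Real.le_mean_of_prod_eq_pow (fun _ => prod_nonneg fun _ _ => hu _)
    (prod_nonneg fun _ _ => hu _) (prod_prod_comp_eq_pow_of_duplicate u I j hcount)

end Duplicate

theorem cp_tensor_strong_dominance_general (m n : ℕ)
    (A : (Fin m → Fin n) → ℝ) (hA : IsCPTensor m n A)
    (s : ℕ) (hs : 0 < s) (I : Fin s → Fin m → Fin n) (jt : Fin m → Fin n)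
    (hcount : ∀ v : Fin n,
      ∑ p : Fin s, (Finset.univ.filter (fun q : Fin m => I p q = v)).card =
        s * (Finset.univ.filter (fun q : Fin m => jt q = v)).card) :
    A jt ≤ (1 / (s : ℝ)) * ∑ p : Fin s, A (I p) := by
  obtain ⟨r, -, u, hu, hAeq⟩ := hA
  have : NeZero s := ⟨hs.ne'⟩
  simp only [hAeq]
  rw [sum_comm, mul_sum]
  refine sum_le_sum fun k _ => ?_
  simpa using prod_comp_le_mean_of_duplicate (hu k) I jt (by simpa using hcount)

/-- Strong dominance property of a CP tensor: if the family I (indexed by Fin s) is an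
s-duplicate of the tuple jt, then the average of the entries of A over I dominates the
entry of A at jt. -/
theorem cp_tensor_strong_dominance (m n : ℕ) (hm : 2 ≤ m)
    (A : (Fin m → Fin n) → ℝ) (hA : IsCPTensor m n A)
    (s : ℕ) (hs : 0 < s) (I : Fin s → Fin m → Fin n) (jt : Fin m → Fin n)
    (hdom : ∀ p : Fin s, Set.range (I p) ⊆ Set.range jt)
    (hcount : ∀ v : Fin n,
      ∑ p : Fin s, (Finset.univ.filter (fun q : Fin m => I p q = v)).card =
        s * (Finset.univ.filter (fun q : Fin m => jt q = v)).card) :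
    A jt ≤ (1 / (s : ℝ)) * ∑ p : Fin s, A (I p) :=
  cp_tensor_strong_dominance_general m n A hA s hs I jt hcount
end
end

section
/- Let A = (a_{i_1⋯i_m}) be an mth order n-dimensional completely positive tensor with m ≥ 2. Then for any index tuple (j_1,…,j_m) with 1 ≤ j_p ≤ n, we have (1/m) Σ_{p=1}^m a_{j_p j_p ⋯ j_p} ≥ a_{j_1⋯j_m}, where a_{j_p⋯j_p} denotes the diagonal entry with all m indices equal to j_p. -/
/-!
By AM-GM applied to the `m` numbers `u(jₚ)ᵐ`, each rank-one term `∏ₚ u(jₚ)` of a CP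
decomposition is at most the mean of its diagonal entries `u(jₚ)ᵐ`; summing over the
decomposition gives the inequality.
-/

noncomputable section
open Classical Finset

theorem Real.prod_le_sum_pow_card_div_card {ι : Type*} {s : Finset ι} (hs : s.Nonempty)
    {x : ι → ℝ} (hx : ∀ i ∈ s, 0 ≤ x i) :
    ∏ i ∈ s, x i ≤ (∑ i ∈ s, x i ^ #s) / #s := by
  have hcard : (#s : ℝ) ≠ 0 := by exact_mod_cast hs.card_pos.ne'
  have amgm := Real.geom_mean_le_arith_mean_weighted s (fun _ => (#s : ℝ)⁻¹)
    (fun i => x i ^ #s) (fun _ _ => by positivity) (by simp [hcard])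
    (fun i hi => pow_nonneg (hx i hi) _)
  calc ∏ i ∈ s, x i = ∏ i ∈ s, (x i ^ #s) ^ (#s : ℝ)⁻¹ :=
        prod_congr rfl fun i hi => (Real.pow_rpow_inv_natCast (hx i hi) hs.card_pos.ne').symm
    _ ≤ ∑ i ∈ s, (#s : ℝ)⁻¹ * x i ^ #s := amgm
    _ = (∑ i ∈ s, x i ^ #s) / #s := by rw [← mul_sum, inv_mul_eq_div]

/-- The diagonal dominance property of a CP tensor:
(1/m) Σ_{p=1}^m a_{j_p⋯j_p} ≥ a_{j_1⋯j_m}. -/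
theorem cp_tensor_diagonal_dominance (m n : ℕ) (hm : 2 ≤ m)
    (A : (Fin m → Fin n) → ℝ) (hA : IsCPTensor m n A)
    (jt : Fin m → Fin n) :
    A jt ≤ (1 / (m : ℝ)) * ∑ p : Fin m, A (fun _ => jt p) := by
  obtain ⟨r, -, u, hu, hAu⟩ := hA
  have : NeZero m := ⟨by omega⟩
  have hdiag (p : Fin m) : A (fun _ => jt p) = ∑ k, u k (jt p) ^ m := by
    simp [hAu, prod_const]
  calc A jt = ∑ k, ∏ j, u k (jt j) := hAu jt
    _ ≤ ∑ k, (∑ p, u k (jt p) ^ m) / m := sum_le_sum fun k _ => by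
        simpa using Real.prod_le_sum_pow_card_div_card univ_nonempty fun p _ => hu k (jt p)
    _ = (1 / (m : ℝ)) * ∑ p, A (fun _ => jt p) := by
        simp only [hdiag, ← sum_div, sum_comm (γ := Fin r)]
        ring
end
end

section
/- A real mth order n-dimensional symmetric tensor A = (a_{i_1⋯i_m}) has a symmetric binary decomposition if and only if A is strongly symmetric. In particular, every strongly symmetric tensor A can be written as A = Σ_{k=1}^r α_k (v^{(k)})^m with α_k ∈ ℝ and v^{(k)} ∈ {0,1}^n binary vectors. -/
/-!
A binary vector is idempotent coordinatewise, so `∏ j, v (f j)` depends only on the set of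
indices occurring in `f`; hence every binary decomposition is strongly symmetric. Conversely, a
strongly symmetric tensor is a function `β` of that index set `T`, and on the finite Boolean
lattice every `β` can be written as `β T = ∑_{S ⊇ T} α S`: the map `α ↦ β` is injective by
Möbius inversion, hence surjective. Then `A = ∑_S α S (1_S)^m`.
-/

noncomputable section
open Classical Finset

/-- A tensor is strongly symmetric if two entries coincide whenever their index tuples
have the same set of distinct indices. -/
def StronglySymmetric (m n : ℕ) (A : (Fin m → Fin n) → ℝ) : Prop :=
  ∀ f g : Fin m → Fin n, Set.range f = Set.range g → A f = A g

/-- A tensor is symmetric if its entries are invariant under any permutation of the indices. -/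
def IsSymmetricTensor (m n : ℕ) (A : (Fin m → Fin n) → ℝ) : Prop :=
  ∀ (σ : Equiv.Perm (Fin m)) (f : Fin m → Fin n), A (f ∘ σ) = A f

theorem Finset.prod_comp_eq_prod_image_of_isIdempotentElem {ι κ M : Type*} [CommMonoid M]
    [DecidableEq κ] (s : Finset ι) (g : ι → κ) {f : κ → M} (hf : ∀ i, IsIdempotentElem (f i)) :
    ∏ j ∈ s, f (g j) = ∏ i ∈ s.image g, f i := by
  rw [prod_comp]
  refine prod_congr rfl fun i hi => (hf i).pow_eq ?_
  obtain ⟨j, hj, rfl⟩ := mem_image.1 hi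
  exact card_ne_zero.2 ⟨j, mem_filter.2 ⟨hj, rfl⟩⟩

theorem IncidenceAlgebra.exists_eq_sum_Ici {𝕜 α : Type*} [Field 𝕜] [PartialOrder α] [OrderTop α]
    [Finite α] [LocallyFiniteOrder α] [DecidableEq α] (g : α → 𝕜) :
    ∃ f : α → 𝕜, ∀ x, g x = ∑ y ∈ Ici x, f y := by
  let sumIci : (α → 𝕜) →ₗ[𝕜] α → 𝕜 :=
    { toFun := fun f x => ∑ y ∈ Ici x, f y
      map_add' := fun f f' => funext fun x => sum_add_distrib
      map_smul' := fun c f => funext fun x => (mul_sum _ _ _).symm }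
  have h_inj : Function.Injective sumIci := fun f f' h => funext fun x => by
    rw [moebius_inversion_top f (sumIci f) (fun _ => rfl),
      moebius_inversion_top f' (sumIci f') (fun _ => rfl), h]
  obtain ⟨f, hf⟩ := LinearMap.injective_iff_surjective.1 h_inj g
  exact ⟨f, fun x => (congrFun hf x).symm⟩

theorem stronglySymmetric_iff_exists_eq_comp_image {m n : ℕ} {A : (Fin m → Fin n) → ℝ} :
    StronglySymmetric m n A ↔ ∃ β : Finset (Fin n) → ℝ, ∀ f, A f = β (univ.image f) := by
  have range_eq_iff (f g : Fin m → Fin n) :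
      Set.range f = Set.range g ↔ univ.image f = univ.image g := by
    rw [← Set.toFinset_range, ← Set.toFinset_range, Set.toFinset_inj]
  constructor
  · intro hA
    have h_factors : Function.FactorsThrough A (fun f => univ.image f) :=
      fun f g h => hA f g ((range_eq_iff f g).2 h)
    exact ⟨Function.extend (fun f => univ.image f) A 0, fun f => (h_factors.extend_apply 0 f).symm⟩
  · rintro ⟨β, hβ⟩ f g h
    rw [hβ, hβ, (range_eq_iff f g).1 h]

theorem symmetric_binary_decomposition_iff_strongly_symmetric_general (m n : ℕ)
    (A : (Fin m → Fin n) → ℝ) :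
    (∃ (r : ℕ) (α : Fin r → ℝ) (v : Fin r → Fin n → ℝ),
      (∀ k i, v k i = 0 ∨ v k i = 1) ∧
      ∀ f : Fin m → Fin n, A f = ∑ k, α k * ∏ j, v k (f j)) ↔
    StronglySymmetric m n A := by
  rw [stronglySymmetric_iff_exists_eq_comp_image]
  constructor
  · rintro ⟨r, α, v, hv, hA⟩
    have h_idem (k i) : IsIdempotentElem (v k i) :=
      IsIdempotentElem.iff_eq_zero_or_one.2 (hv k i)
    refine ⟨fun T => ∑ k, α k * ∏ i ∈ T, v k i, fun f => ?_⟩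
    rw [hA]
    exact sum_congr rfl fun k _ => by
      rw [prod_comp_eq_prod_image_of_isIdempotentElem _ f (h_idem k)]
  · rintro ⟨β, hβ⟩
    obtain ⟨α, hα⟩ := IncidenceAlgebra.exists_eq_sum_Ici β
    let e := (Fintype.equivFin (Finset (Fin n))).symm
    refine ⟨_, α ∘ e, fun k i => if i ∈ e k then 1 else 0,
      fun k i => by dsimp only; split_ifs <;> simp, fun f => ?_⟩
    simp only [Function.comp_apply]
    rw [hβ, hα, e.sum_comp (fun S => α S * ∏ j, if f j ∈ S then (1 : ℝ) else 0)]
    simp only [prod_boole, mul_boole, mem_univ, forall_const, ← sum_filter]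
    congr 1
    ext S
    simp [image_subset_iff]

/-- A symmetric tensor has a symmetric binary decomposition (A = Σ_k α_k (v^{(k)})^m with
real coefficients α_k and binary vectors v^{(k)} ∈ {0,1}^n) if and only if it is strongly
symmetric. -/
theorem symmetric_binary_decomposition_iff_strongly_symmetric (m n : ℕ)
    (A : (Fin m → Fin n) → ℝ) (hsym : IsSymmetricTensor m n A) :
    (∃ (r : ℕ) (α : Fin r → ℝ) (v : Fin r → Fin n → ℝ),
      (∀ k i, v k i = 0 ∨ v k i = 1) ∧
      ∀ f : Fin m → Fin n, A f = ∑ k, α k * ∏ j, v k (f j)) ↔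
    StronglySymmetric m n A :=
  symmetric_binary_decomposition_iff_strongly_symmetric_general m n A
end
end

section
/- Let A = (a_{i_1⋯i_m}) be an mth order n-dimensional strongly symmetric, hierarchically dominated nonnegative tensor. Then for every p with 1 ≤ p ≤ m−1, every q with 1 ≤ q ≤ m−p, and every increasing tuple 1 ≤ i_1 < ⋯ < i_p ≤ n, we have a_{i_1⋯i_p i_p⋯i_p} ≥ Σ a_{j_1⋯j_{p+q} j_{p+q}⋯j_{p+q}}, where the sum runs over all increasing tuples 1 ≤ j_1 < ⋯ < j_{p+q} ≤ n with {i_1,…,i_p} ⊆ {j_1,…,j_{p+q}}, and a_{i_1⋯i_p i_p⋯i_p} denotes the entry whose index tuple is (i_1,…,i_p) followed by m−p repetitions of i_p. -/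
noncomputable section
open Classical Finset

/-- The index tuple of length m consisting of (i_1, …, i_p) followed by m − p repetitions
of i_p. -/
def pad (p m n : ℕ) (hp : 0 < p) (i : Fin p → Fin n) : Fin m → Fin n :=
  fun q => if h : (q : ℕ) < p then i ⟨q, h⟩ else i ⟨p - 1, Nat.sub_lt hp Nat.one_pos⟩

/-- A strongly symmetric nonnegative tensor is hierarchically dominated if for every
1 ≤ p ≤ m − 1 and every increasing tuple i_1 < ⋯ < i_p, the entry a_{i_1⋯i_p i_p⋯i_p}
dominates the sum of the entries a_{j_1⋯j_{p+1} j_{p+1}⋯j_{p+1}} over all increasing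
tuples j_1 < ⋯ < j_{p+1} whose index set contains {i_1, …, i_p}. -/
def HierDominated (m n : ℕ) (A : (Fin m → Fin n) → ℝ) : Prop :=
  ∀ (p : ℕ) (hp : 0 < p), p ≤ m - 1 → ∀ i : Fin p → Fin n, StrictMono i →
    (∑ j ∈ Finset.univ.filter
        (fun j : Fin (p + 1) → Fin n => StrictMono j ∧ Set.range i ⊆ Set.range j),
      A (pad (p + 1) m n (Nat.succ_pos p) j)) ≤ A (pad p m n hp i)

/-!
Induction on `q`. Every increasing `(r+1)`-tuple `j` whose entries contain those of `i`
(with `r ≥ p`) contains such an increasing `r`-tuple `k`: drop an entry of `j` that is not an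
entry of `i`. Hence the sum over the `j` is at most the sum over all pairs `k ⊆ j`, and
hierarchical dominance at level `r` bounds the inner sum over `j ⊇ k` by the entry of `k`.
This lowers the depth from `q + 1` to `q`.
-/

section Supertuples

variable {α : Type*} [LinearOrder α]

theorem exists_strictMono_range_between {p r : ℕ} (hpr : p ≤ r) {i : Fin p → α}
    {j : Fin (r + 1) → α} (hj : StrictMono j) (hij : Set.range i ⊆ Set.range j) :
    ∃ k : Fin r → α, StrictMono k ∧ Set.range i ⊆ Set.range k ∧ Set.range k ⊆ Set.range j := by
  have hsub : univ.image i ⊆ univ.image j := by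
    simpa only [← coe_subset, coe_image, coe_univ, Set.image_univ] using hij
  have hcard_i : #(univ.image i) ≤ r := card_image_le.trans (by simpa using hpr)
  have hcard_j : r ≤ #(univ.image j) := by simp [card_image_of_injective _ hj.injective]
  obtain ⟨u, hiu, huj, hu⟩ := exists_subsuperset_card_eq hsub hcard_i hcard_j
  refine ⟨u.orderEmbOfFin hu, (u.orderEmbOfFin hu).strictMono, ?_, ?_⟩ <;>
    rw [range_orderEmbOfFin]
  · simpa only [← coe_subset, coe_image, coe_univ, Set.image_univ] using hiu
  · simpa only [← coe_subset, coe_image, coe_univ, Set.image_univ] using huj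

variable [Fintype α]

def increasingSupertuples {p : ℕ} (i : Fin p → α) (r : ℕ) : Finset (Fin r → α) :=
  univ.filter fun j => StrictMono j ∧ Set.range i ⊆ Set.range j

theorem mem_increasingSupertuples {p r : ℕ} {i : Fin p → α} {j : Fin r → α} :
    j ∈ increasingSupertuples i r ↔ StrictMono j ∧ Set.range i ⊆ Set.range j := by
  simp [increasingSupertuples]

theorem sum_increasingSupertuples_succ_le {p r : ℕ} (hpr : p ≤ r) (i : Fin p → α)
    {f : (Fin (r + 1) → α) → ℝ} (hf : ∀ j, 0 ≤ f j) :
    ∑ j ∈ increasingSupertuples i (r + 1), f j ≤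
      ∑ k ∈ increasingSupertuples i r, ∑ j ∈ increasingSupertuples k (r + 1), f j := by
  set S := increasingSupertuples i r
  set S' := increasingSupertuples i (r + 1)
  calc ∑ j ∈ S', f j
      ≤ ∑ j ∈ S', ∑ _k ∈ S.filter (fun k => Set.range k ⊆ Set.range j), f j := by
        refine sum_le_sum fun j hj => ?_
        obtain ⟨hj_mono, hij⟩ := mem_increasingSupertuples.mp hj
        obtain ⟨k, hk_mono, hik, hkj⟩ := exists_strictMono_range_between hpr hj_mono hij
        exact single_le_sum (f := fun _ => f j) (fun _ _ => hf j)
          (mem_filter.mpr ⟨mem_increasingSupertuples.mpr ⟨hk_mono, hik⟩, hkj⟩)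
    _ = ∑ k ∈ S, ∑ j ∈ S'.filter (fun j => Set.range k ⊆ Set.range j), f j :=
        sum_comm' fun _ _ => by simp only [mem_filter]; tauto
    _ ≤ ∑ k ∈ S, ∑ j ∈ increasingSupertuples k (r + 1), f j := by
        refine sum_le_sum fun k _ => sum_le_sum_of_subset_of_nonneg (fun j hj => ?_)
          fun j _ _ => hf j
        obtain ⟨hj, hkj⟩ := mem_filter.mp hj
        exact mem_increasingSupertuples.mpr ⟨(mem_increasingSupertuples.mp hj).1, hkj⟩

end Supertuples

theorem HierDominated.sum_pad_increasingSupertuples_succ_le {m n : ℕ} {A : (Fin m → Fin n) → ℝ}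
    (hnn : ∀ f, 0 ≤ A f) (hhd : HierDominated m n A) {p r : ℕ} (hr : 0 < r) (hrm : r ≤ m - 1)
    (hpr : p ≤ r) (i : Fin p → Fin n) :
    ∑ j ∈ increasingSupertuples i (r + 1), A (pad (r + 1) m n r.succ_pos j) ≤
      ∑ k ∈ increasingSupertuples i r, A (pad r m n hr k) :=
  (sum_increasingSupertuples_succ_le hpr i fun _ => hnn _).trans <|
    sum_le_sum fun k hk => hhd r hr hrm k (mem_increasingSupertuples.mp hk).1

/-- For a strongly symmetric, hierarchically dominated nonnegative tensor, the entry
a_{i_1⋯i_p i_p⋯i_p} dominates, for each 1 ≤ q ≤ m − p, the sum of the entries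
a_{j_1⋯j_{p+q} j_{p+q}⋯j_{p+q}} over all increasing tuples j_1 < ⋯ < j_{p+q} whose index
set contains {i_1, …, i_p}. -/
theorem hier_dominated_deep_dominance (m n : ℕ)
    (A : (Fin m → Fin n) → ℝ)
    (hnn : ∀ f, 0 ≤ A f) (hhd : HierDominated m n A) :
    ∀ (p q : ℕ) (hp : 0 < p), p ≤ m - 1 → 0 < q → q ≤ m - p →
      ∀ i : Fin p → Fin n, StrictMono i →
        (∑ j ∈ Finset.univ.filter
            (fun j : Fin (p + q) → Fin n => StrictMono j ∧ Set.range i ⊆ Set.range j),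
          A (pad (p + q) m n (by omega) j)) ≤ A (pad p m n hp i) := by
  intro p q hp hpm hq hqm i hi
  induction q, hq using Nat.le_induction with
  | base => exact hhd p hp hpm i hi
  | succ q _ ih =>
    calc ∑ j ∈ increasingSupertuples i (p + q + 1), A (pad (p + q + 1) m n (by omega) j)
        ≤ ∑ k ∈ increasingSupertuples i (p + q), A (pad (p + q) m n (by omega) k) :=
          hhd.sum_pad_increasingSupertuples_succ_le hnn (by omega) (by omega) (by omega) i
      _ ≤ A (pad p m n hp i) := ih (by omega)
end
end

section
/- Let A = (a_{i_1⋯i_m}) be an mth order n-dimensional strongly symmetric, hierarchically dominated nonnegative tensor. Then A is a completely positive tensor: there exist r ≥ 1 and entrywise nonnegative vectors u^{(1)},…,u^{(r)} ∈ ℝ^n such that a_{i_1⋯i_m} = Σ_{k=1}^r u^{(k)}_{i_1}⋯u^{(k)}_{i_m} for all indices. -/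
noncomputable section
open Classical Finset

/-!
A strongly symmetric tensor is a function `a` of the index set of an entry, extended by `0`
to sets with more than `m` elements. Möbius inversion over supersets writes
`a R = ∑_{S ⊇ R} c S`, so `A` is the sum over `S` of the rank-one tensors of the vectors
`(c S)^{1/m} 𝟙_S`, and it remains to see `c S ≥ 0` for nonempty `S`. This goes by downward
induction: every `U ⊋ S` contains a cover `T` of `S` (`#T = #S + 1`), so if `c ≥ 0` strictly
above `S` then `∑_{U ⊋ S} c U ≤ ∑_T ∑_{U ⊇ T} c U = ∑_T a T ≤ a S`, the last step being
hierarchical dominance.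
-/

namespace Finset

variable {α : Type*} [Fintype α] [DecidableEq α]

def supersetMobius (a : Finset α → ℝ) (S : Finset α) : ℝ :=
  a S - ∑ T ∈ (univ.filter (S ⊂ ·)).attach, supersetMobius a T
termination_by Fintype.card α - #S
decreasing_by
  have := card_lt_card (mem_filter.1 T.2).2
  have := card_le_univ T.1
  omega

theorem sum_supersetMobius (a : Finset α → ℝ) (S : Finset α) :
    ∑ T ∈ univ.filter (S ⊆ ·), supersetMobius a T = a S := by
  have hsplit : (univ.filter (S ⊆ ·)).erase S = univ.filter (S ⊂ ·) := by
    ext T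
    simp [ssubset_iff_subset_ne, and_comm, eq_comm]
  rw [← add_sum_erase _ _ (mem_filter.2 ⟨mem_univ S, Subset.rfl⟩), hsplit, supersetMobius,
    sum_attach]
  ring

theorem supersetMobius_nonneg (a : Finset α → ℝ)
    (ha : ∀ S : Finset α, S.Nonempty →
      ∑ T ∈ univ.filter (fun T => S ⊆ T ∧ #T = #S + 1), a T ≤ a S) :
    ∀ S : Finset α, S.Nonempty → 0 ≤ supersetMobius a S := by
  intro S
  induction S using WellFoundedGT.induction with
  | _ S ih =>
  intro hS
  set covers := univ.filter (fun T => S ⊆ T ∧ #T = #S + 1)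
  have hcover : ∀ U, S ⊂ U → (covers.filter (· ⊆ U)).Nonempty := by
    intro U hSU
    obtain ⟨x, hxU, hxS⟩ := exists_of_ssubset hSU
    exact ⟨insert x S, by simp [covers, card_insert_of_notMem hxS, insert_subset hxU hSU.subset]⟩
  have hswap : ∑ T ∈ covers, ∑ U ∈ univ.filter (T ⊆ ·), supersetMobius a U
      = ∑ U ∈ univ.filter (S ⊂ ·), ∑ _T ∈ covers.filter (· ⊆ U), supersetMobius a U := by
    refine sum_comm' fun T U => ?_
    simp only [covers, mem_filter, mem_univ, true_and]
    constructor
    · rintro ⟨⟨hST, hcard⟩, hTU⟩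
      refine ⟨⟨⟨hST, hcard⟩, hTU⟩, ssubset_of_ssubset_of_subset ?_ hTU⟩
      exact ssubset_of_subset_of_ne hST (by rintro rfl; omega)
    · rintro ⟨h, -⟩
      exact ⟨h.1, h.2⟩
  have hbound : ∑ U ∈ univ.filter (S ⊂ ·), supersetMobius a U ≤ a S :=
    calc ∑ U ∈ univ.filter (S ⊂ ·), supersetMobius a U
        ≤ ∑ U ∈ univ.filter (S ⊂ ·), ∑ _T ∈ covers.filter (· ⊆ U), supersetMobius a U := by
          refine sum_le_sum fun U hU => ?_
          have hSU : S ⊂ U := (mem_filter.1 hU).2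
          rw [sum_const, nsmul_eq_mul]
          exact le_mul_of_one_le_left (ih U hSU (hS.mono hSU.subset))
            (by exact_mod_cast (hcover U hSU).card_pos)
      _ = ∑ T ∈ covers, a T := by
          rw [← hswap]
          exact sum_congr rfl fun T _ => sum_supersetMobius a T
      _ ≤ a S := ha S hS
  rw [supersetMobius, sum_attach]
  linarith

end Finset

theorem Finset.sum_filter_strictMono {α β : Type*} [Fintype α] [LinearOrder α]
    [AddCommMonoid β] (k : ℕ) (P : Set α → Prop) (g : Set α → β) :
    ∑ j ∈ univ.filter (fun j : Fin k → α => StrictMono j ∧ P (Set.range j)), g (Set.range j)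
      = ∑ T ∈ univ.filter (fun T : Finset α => P ↑T ∧ #T = k), g ↑T := by
  have hrange : ∀ j : Fin k → α, ↑(univ.image j) = Set.range j := by simp
  refine sum_nbij (fun j => univ.image j) (fun j hj => ?_) (fun j hj j' hj' hjj' => ?_)
    (fun T hT => ?_) fun j _ => by rw [hrange]
  · simp only [mem_filter, mem_univ, true_and] at hj ⊢
    rw [hrange, card_image_of_injective _ hj.1.injective, card_univ, Fintype.card_fin]
    exact ⟨hj.2, rfl⟩
  · simp only [mem_coe, mem_filter, mem_univ, true_and] at hj hj'
    rw [← hj.1.range_inj hj'.1, ← hrange, ← hrange]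
    exact congrArg _ hjj'
  · simp only [mem_coe, mem_filter, mem_univ, true_and] at hT
    refine ⟨T.orderEmbOfFin hT.2, ?_, ?_⟩
    · simp only [mem_coe, mem_filter, mem_univ, true_and, range_orderEmbOfFin]
      exact ⟨(T.orderEmbOfFin hT.2).strictMono, hT.1⟩
    · apply coe_injective
      rw [hrange, range_orderEmbOfFin]

theorem range_pad {p m n : ℕ} (hp : 0 < p) (hpm : p ≤ m) (i : Fin p → Fin n) :
    Set.range (pad p m n hp i) = Set.range i := by
  refine Set.Subset.antisymm ?_ fun _ ⟨k, hk⟩ => ⟨⟨k, k.2.trans_le hpm⟩, by simp [pad, hk]⟩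
  rintro _ ⟨q, rfl⟩
  unfold pad
  split <;> exact ⟨_, rfl⟩

section Tensor

variable {m n : ℕ} {A : (Fin m → Fin n) → ℝ}

def setEntry (A : (Fin m → Fin n) → ℝ) (s : Set (Fin n)) : ℝ :=
  if h : ∃ f, Set.range f = s then A h.choose else 0

theorem StronglySymmetric.apply_eq_setEntry (hss : StronglySymmetric m n A)
    (f : Fin m → Fin n) : A f = setEntry A (Set.range f) := by
  have h : ∃ g, Set.range g = Set.range f := ⟨f, rfl⟩
  rw [setEntry, dif_pos h]
  exact hss _ _ h.choose_spec.symm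

theorem setEntry_nonneg (hnn : ∀ f, 0 ≤ A f) (s : Set (Fin n)) : 0 ≤ setEntry A s := by
  unfold setEntry
  split
  · exact hnn _
  · exact le_rfl

theorem setEntry_eq_zero_of_lt_card {S : Finset (Fin n)} (hS : m < #S) :
    setEntry A ↑S = 0 := by
  refine dif_neg ?_
  rintro ⟨f, hf⟩
  have hSf : S = univ.image f := coe_injective (by simp [hf])
  have := card_image_le (s := univ) (f := f)
  rw [← hSf, card_univ, Fintype.card_fin] at this
  omega

theorem HierDominated.sum_setEntry_covers_le (hss : StronglySymmetric m n A)
    (hnn : ∀ f, 0 ≤ A f) (hhd : HierDominated m n A) {S : Finset (Fin n)} (hS : S.Nonempty) :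
    ∑ T ∈ univ.filter (fun T => S ⊆ T ∧ #T = #S + 1), setEntry A ↑T ≤ setEntry A ↑S := by
  rcases lt_or_ge #S m with hSm | hmS
  · have h := hhd #S hS.card_pos (by omega) _ (S.orderEmbOfFin rfl).strictMono
    rw [hss.apply_eq_setEntry, range_pad _ hSm.le, range_orderEmbOfFin,
      sum_congr rfl fun j _ => by rw [hss.apply_eq_setEntry, range_pad _ hSm],
      sum_filter_strictMono (P := (↑S ⊆ ·)) (g := setEntry A)] at h
    simpa only [coe_subset] using h
  · rw [sum_eq_zero fun T hT => setEntry_eq_zero_of_lt_card (by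
      have := (mem_filter.1 hT).2.2
      omega)]
    exact setEntry_nonneg hnn _

theorem isCPTensor_of_fintype {ι : Type*} [Fintype ι] [Nonempty ι] (u : ι → Fin n → ℝ)
    (hu : ∀ k i, 0 ≤ u k i) (hA : ∀ f, A f = ∑ k, ∏ j, u k (f j)) : IsCPTensor m n A := by
  let e := (Fintype.equivFin ι).symm
  exact ⟨Fintype.card ι, Fintype.card_pos, fun k => u (e k), fun k => hu (e k),
    fun f => by rw [hA, ← e.sum_comp]⟩

theorem isCPTensor_of_sum_supersets (hm : 0 < m) (c : Finset (Fin n) → ℝ)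
    (hc : ∀ S, S.Nonempty → 0 ≤ c S)
    (hA : ∀ f, A f = ∑ S ∈ univ.filter (univ.image f ⊆ ·), c S) : IsCPTensor m n A := by
  refine isCPTensor_of_fintype (fun S i => if i ∈ S then c S ^ (m⁻¹ : ℝ) else 0)
    (fun S i => ?_) fun f => ?_
  · split_ifs with hi
    · exact Real.rpow_nonneg (hc S ⟨i, hi⟩) _
    · exact le_rfl
  · rw [hA, sum_filter]
    refine sum_congr rfl fun S _ => ?_
    rw [Fintype.prod_ite_zero, prod_const, card_univ, Fintype.card_fin]
    simp only [image_subset_iff, mem_univ, true_implies]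
    split_ifs with hf
    · exact (Real.rpow_inv_natCast_pow (hc S ⟨f ⟨0, hm⟩, hf _⟩) hm.ne').symm
    · rfl

end Tensor

/-- A strongly symmetric, hierarchically dominated nonnegative tensor is a completely
positive tensor. -/
theorem hier_dominated_is_cp (m n : ℕ) (hm : 1 ≤ m)
    (A : (Fin m → Fin n) → ℝ)
    (hss : StronglySymmetric m n A) (hnn : ∀ f, 0 ≤ A f) (hhd : HierDominated m n A) :
    IsCPTensor m n A := by
  let a : Finset (Fin n) → ℝ := fun S => setEntry A ↑S
  refine isCPTensor_of_sum_supersets hm (supersetMobius a)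
    (supersetMobius_nonneg a fun S hS => hhd.sum_setEntry_covers_le hss hnn hS) fun f => ?_
  rw [sum_supersetMobius, hss.apply_eq_setEntry]
  simp [a]
end
end
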